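/- Accuracy Lemma: for every real x with 0 < x ≤ 1, the discrepancy Δ(x) := B(x) − A(x) satisfies (3/2^17)·x^5 < Δ(x) ≤ (4/π − 14/11)·x^5; moreover the upper bound is attained at x = 1, i.e., B(1) − A(1) = 4/π − 14/11. -/

import Mathlib

open Real

/-- The series `B(x) = ∑ ((1/(2n-1))·(1/4ⁿ)·C(2n,n))²·xⁿ`. -/
noncomputable def Bfun (x : ℝ) : ℝ :=
  ∑' n : ℕ, ((1 / (2 * (n : ℝ) - 1)) * (1 / 4 ^ n) * (Nat.choose (2 * n) n)) ^ 2 * x ^ n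

/-- The function `A(x) = 1 + 3x/(10 + √(4 - 3x))`. -/
noncomputable def Afun (x : ℝ) : ℝ := 1 + 3 * x / (10 + Real.sqrt (4 - 3 * x))

/-!
Write `B(x) = ∑ aₙ² xⁿ`, where `-∑ aₙ tⁿ = √(1 - t)` is the binomial series, and expand
`A(x) = ∑ eₙ xⁿ`: the identity `(32 + x) A(x) = 32 + 11x - x √(4 - 3x)` turns into a linear
recursion for `eₙ`. The coefficients `aₙ² - eₙ` of `Δ(x)` vanish for `n ≤ 4`, equal `3/2¹⁷` at
`n = 5`, are positive at `n = 6` and are nonnegative for all `n`: from `n = 5` on, the recursion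
keeps `0 ≤ eₙ ≤ c (3/4)ⁿ aₙ` while `c (3/4)ⁿ ≤ aₙ`, with `c = 28/243`. Hence `Δ(x)` is at least
the sum of its terms of degree 5 and 6, which exceeds `(3/2¹⁷) x⁵`, and `Δ(x) ≤ x⁵ ∑ (aₙ² - eₙ) = x⁵ Δ(1)`. Finally
`B(1) = 4/π`, since `∑_{k<n} a_k² = 4n²(4n - 3) aₙ²`, which Wallis' product sends to `4/π`.
-/

open Filter Topology Finset

noncomputable def sqrtCoeff (n : ℕ) : ℝ :=
  (1 / (2 * (n : ℝ) - 1)) * (1 / 4 ^ n) * (Nat.choose (2 * n) n)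

lemma sqrtCoeff_zero : sqrtCoeff 0 = -1 := by simp [sqrtCoeff]

lemma sqrtCoeff_succ (n : ℕ) :
    (2 * (n : ℝ) + 2) * sqrtCoeff (n + 1) = (2 * n - 1) * sqrtCoeff n := by
  have hrec : ((n : ℝ) + 1) * Nat.centralBinom (n + 1) = 2 * (2 * n + 1) * Nat.centralBinom n := by
    exact_mod_cast Nat.succ_mul_centralBinom_succ n
  have h₁ : 2 * ((n : ℝ) + 1) - 1 ≠ 0 := by
    rw [sub_ne_zero]; norm_cast; omega
  have h₂ : 2 * (n : ℝ) - 1 ≠ 0 := by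
    rw [sub_ne_zero]; norm_cast; omega
  simp only [sqrtCoeff, ← Nat.centralBinom_eq_two_mul_choose, pow_succ]
  push_cast
  field_simp
  linear_combination 2 * hrec

lemma sqrtCoeff_succ_sq (n : ℕ) :
    (2 * (n : ℝ) + 2) ^ 2 * sqrtCoeff (n + 1) ^ 2 = (2 * n - 1) ^ 2 * sqrtCoeff n ^ 2 := by
  rw [← mul_pow, sqrtCoeff_succ, mul_pow]

lemma Ring.choose_succ_mul {K : Type*} [Field K] [CharZero K] (a : K) (n : ℕ) :
    Ring.choose a (n + 1) * (n + 1) = Ring.choose a n * (a - n) := by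
  simp only [Ring.choose_eq_smul, smul_eq_mul, descPochhammer_succ_right,
    Polynomial.smeval_mul, Polynomial.smeval_sub, Polynomial.smeval_X,
    Polynomial.smeval_natCast, Nat.factorial_succ]
  push_cast
  field_simp
  ring

lemma neg_sqrtCoeff_eq_choose (n : ℕ) : -sqrtCoeff n = Ring.choose (1 / 2 : ℝ) n * (-1) ^ n := by
  induction n with
  | zero => simp [sqrtCoeff_zero]
  | succ n ih =>
    have hchoose := Ring.choose_succ_mul (1 / 2 : ℝ) n
    have hn : (2 * (n : ℝ) + 2) ≠ 0 := by positivity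
    apply mul_right_cancel₀ hn
    linear_combination 2 * (-1) ^ n * hchoose - sqrtCoeff_succ n + (2 * n - 1) * ih

lemma hasSum_sqrtCoeff_mul_pow {t : ℝ} (ht : |t| < 1) :
    HasSum (fun n => sqrtCoeff n * t ^ n) (-√(1 - t)) := by
  have h := Real.one_add_rpow_hasFPowerSeriesOnBall_zero (a := 1 / 2).hasSum (y := -t)
    (by simpa [enorm_eq_nnnorm, ← NNReal.coe_lt_one] using ht)
  rw [zero_add, ← sub_eq_add_neg, ← sqrt_eq_rpow] at h
  have hterm (n : ℕ) : binomialSeries ℝ (1 / 2 : ℝ) n (fun _ => -t) = -(sqrtCoeff n * t ^ n) := by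
    rw [binomialSeries_apply, List.ofFn_const, List.prod_replicate, smul_eq_mul, neg_pow,
      ← mul_assoc, ← neg_sqrtCoeff_eq_choose, neg_mul]
  simp_rw [hterm] at h
  simpa using h.neg

lemma sum_range_sqrtCoeff_sq (n : ℕ) :
    ∑ k ∈ range n, sqrtCoeff k ^ 2 = 4 * (n : ℝ) ^ 2 * (4 * n - 3) * sqrtCoeff n ^ 2 := by
  induction n with
  | zero => simp
  | succ n ih =>
    rw [sum_range_succ, ih]
    push_cast
    linear_combination -(4 * (n : ℝ) + 1) * sqrtCoeff_succ_sq n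

lemma wallis_W_mul_sqrtCoeff_sq (n : ℕ) :
    Wallis.W n * (sqrtCoeff n ^ 2 * ((2 * (n : ℝ) - 1) ^ 2 * (2 * n + 1))) = 1 := by
  induction n with
  | zero => simp [Wallis.W, sqrtCoeff_zero]
  | succ n ih =>
    rw [Wallis.W_succ]
    push_cast
    field_simp
    linear_combination (2 * (n : ℝ) + 1) ^ 2 * (2 * n + 3) * Wallis.W n * sqrtCoeff_succ_sq n
      + (2 * (n : ℝ) + 1) * (2 * n + 3) * ih

lemma tendsto_sum_range_sqrtCoeff_sq :
    Tendsto (fun n => ∑ k ∈ range n, sqrtCoeff k ^ 2) atTop (𝓝 (4 / π)) := by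
  have hW : Tendsto (fun n => (Wallis.W n)⁻¹) atTop (𝓝 (2 / π)) := by
    simpa [inv_div] using Wallis.tendsto_W_nhds_pi_div_two.inv₀ (by positivity)
  have hq : Tendsto (fun n : ℕ => 4 * (4 - 3 * (n : ℝ)⁻¹) / ((2 - (n : ℝ)⁻¹) ^ 2 * (2 + (n : ℝ)⁻¹)))
      atTop (𝓝 2) := by
    have hc : ContinuousAt (fun u : ℝ => 4 * (4 - 3 * u) / ((2 - u) ^ 2 * (2 + u))) 0 :=
      ContinuousAt.div (by fun_prop) (by fun_prop) (by norm_num)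
    convert hc.tendsto.comp tendsto_inv_atTop_nhds_zero_nat using 2
    · rfl
    · norm_num
  convert (hq.mul hW).congr' ?_ using 2
  · ring
  filter_upwards [eventually_ge_atTop 1] with n hn
  have hn₀ : (n : ℝ) ≠ 0 := by positivity
  have h₁ : 2 * (n : ℝ) - 1 ≠ 0 := by
    rw [sub_ne_zero]; norm_cast; omega
  have hWn := Wallis.W_pos n
  have hsq : sqrtCoeff n ^ 2 = (Wallis.W n)⁻¹ * ((2 * (n : ℝ) - 1) ^ 2 * (2 * n + 1))⁻¹ := by
    field_simp
    linear_combination wallis_W_mul_sqrtCoeff_sq n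
  rw [sum_range_sqrtCoeff_sq, hsq]
  field_simp

lemma hasSum_sqrtCoeff_sq : HasSum (fun n => sqrtCoeff n ^ 2) (4 / π) :=
  (hasSum_iff_tendsto_nat_of_nonneg (fun _ => sq_nonneg _) _).mpr tendsto_sum_range_sqrtCoeff_sq

lemma hasSum_Bfun {x : ℝ} (hx₀ : 0 ≤ x) (hx₁ : x ≤ 1) :
    HasSum (fun n => sqrtCoeff n ^ 2 * x ^ n) (Bfun x) :=
  (hasSum_sqrtCoeff_sq.summable.of_nonneg_of_le (fun _ => by positivity)
    (fun n => mul_le_of_le_one_right (sq_nonneg _) (pow_le_one₀ hx₀ hx₁))).hasSum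

lemma Bfun_one : Bfun 1 = 4 / π := by
  refine (hasSum_Bfun zero_le_one le_rfl).unique ?_
  simpa using hasSum_sqrtCoeff_sq

lemma Afun_one : Afun 1 = 14 / 11 := by norm_num [Afun]

/-- The Taylor coefficients of `Afun`, read off from `(32 + x) Afun x = 32 + 11 x - x √(4 - 3x)`
and `√(4 - 3x) = -2 ∑ sqrtCoeff n (3x/4)ⁿ`. -/
noncomputable def afunCoeff : ℕ → ℝ
  | 0 => 1
  | 1 => 1 / 4
  | n + 2 => (2 * sqrtCoeff (n + 1) * (3 / 4) ^ (n + 1) - afunCoeff (n + 1)) / 32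

lemma afunCoeff_eq_sqrtCoeff_sq {n : ℕ} (hn : n ≤ 4) : afunCoeff n = sqrtCoeff n ^ 2 := by
  interval_cases n <;> norm_num [afunCoeff, sqrtCoeff, Nat.choose]

lemma sqrtCoeff_sq_sub_afunCoeff_five : sqrtCoeff 5 ^ 2 - afunCoeff 5 = 3 / 2 ^ 17 := by
  norm_num [afunCoeff, sqrtCoeff, Nat.choose]

lemma sqrtCoeff_sq_sub_afunCoeff_six_pos : 0 < sqrtCoeff 6 ^ 2 - afunCoeff 6 := by
  norm_num [afunCoeff, sqrtCoeff, Nat.choose]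

/- `28 / 243 = sqrtCoeff 5 * (4 / 3) ^ 5`; the ratio `sqrtCoeff (n + 1) / sqrtCoeff n` is at least
`3 / 4` from `n = 5` on. -/
lemma geom_le_sqrtCoeff {n : ℕ} (hn : 5 ≤ n) : 28 / 243 * (3 / 4) ^ n ≤ sqrtCoeff n := by
  induction n, hn using Nat.le_induction with
  | base => norm_num [sqrtCoeff, Nat.choose]
  | succ n hn ih =>
    have hn' : (5 : ℝ) ≤ n := by exact_mod_cast hn
    have hpos : 0 ≤ 28 / 243 * (3 / 4 : ℝ) ^ n := by positivity
    rw [pow_succ]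
    nlinarith [sqrtCoeff_succ n]

lemma afunCoeff_mem_Icc {n : ℕ} (hn : 5 ≤ n) :
    afunCoeff n ∈ Set.Icc 0 (28 / 243 * (3 / 4) ^ n * sqrtCoeff n) := by
  induction n, hn using Nat.le_induction with
  | base => norm_num [afunCoeff, sqrtCoeff, Nat.choose]
  | succ n hn ih =>
    obtain ⟨m, rfl⟩ : ∃ m, n = m + 1 := ⟨n - 1, by omega⟩
    have hm : (4 : ℝ) ≤ m := by exact_mod_cast (by omega : 4 ≤ m)
    have ha : 0 ≤ sqrtCoeff (m + 1) := le_trans (by positivity) (geom_le_sqrtCoeff hn)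
    have hrec := sqrtCoeff_succ (m + 1)
    rw [afunCoeff, pow_succ (3 / 4 : ℝ) (m + 1)]
    set p := (3 / 4 : ℝ) ^ (m + 1)
    have hpa : 0 ≤ p * sqrtCoeff (m + 1) := mul_nonneg (by positivity) ha
    obtain ⟨ih₀, ih₁⟩ := ih
    push_cast at hrec
    constructor
    · nlinarith
    · nlinarith [congrArg (· * p) hrec, mul_nonneg hpa (by linarith : (0 : ℝ) ≤ m - 4)]

lemma afunCoeff_nonneg (n : ℕ) : 0 ≤ afunCoeff n := by
  rcases le_or_gt n 4 with hn | hn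
  · exact afunCoeff_eq_sqrtCoeff_sq hn ▸ sq_nonneg _
  · exact (afunCoeff_mem_Icc hn).1

lemma afunCoeff_le_sqrtCoeff_sq (n : ℕ) : afunCoeff n ≤ sqrtCoeff n ^ 2 := by
  rcases le_or_gt n 4 with hn | hn
  · exact (afunCoeff_eq_sqrtCoeff_sq hn).le
  · have ha := geom_le_sqrtCoeff hn
    calc afunCoeff n ≤ 28 / 243 * (3 / 4) ^ n * sqrtCoeff n := (afunCoeff_mem_Icc hn).2
      _ ≤ sqrtCoeff n ^ 2 := by
        rw [sq]; exact mul_le_mul_of_nonneg_right ha (le_trans (by positivity) ha)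

lemma afunCoeff_succ_add (n : ℕ) :
    32 * afunCoeff (n + 1) + afunCoeff n =
      2 * sqrtCoeff n * (3 / 4) ^ n + if n = 0 then 11 else 0 := by
  cases n with
  | zero => norm_num [afunCoeff, sqrtCoeff_zero]
  | succ n => rw [afunCoeff, if_neg n.succ_ne_zero]; ring

lemma hasSum_sqrtCoeff_mul_pow_mul {x : ℝ} (hx : |x| < 4 / 3) :
    HasSum (fun n => 2 * sqrtCoeff n * (3 / 4) ^ n * x ^ (n + 1)) (-(x * √(4 - 3 * x))) := by
  have h := (hasSum_sqrtCoeff_mul_pow (t := 3 / 4 * x)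
    (by rw [abs_mul]; norm_num; linarith)).mul_left (2 * x)
  rw [show 1 - 3 / 4 * x = (4 - 3 * x) / 2 ^ 2 by ring, sqrt_div' _ (by positivity),
    sqrt_sq two_pos.le, show 2 * x * -(√(4 - 3 * x) / 2) = -(x * √(4 - 3 * x)) by ring] at h
  exact h.congr_fun fun n => by ring

lemma hasSum_afunCoeff_mul_pow {x : ℝ} (hx₀ : 0 ≤ x) (hx₁ : x ≤ 1) :
    HasSum (fun n => afunCoeff n * x ^ n) (Afun x) := by
  have hE : Summable (fun n => afunCoeff n * x ^ n) :=
    (hasSum_Bfun hx₀ hx₁).summable.of_nonneg_of_le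
      (fun n => mul_nonneg (afunCoeff_nonneg n) (pow_nonneg hx₀ n))
      (fun n => mul_le_mul_of_nonneg_right (afunCoeff_le_sqrtCoeff_sq n) (pow_nonneg hx₀ n))
  set E := ∑' n, afunCoeff n * x ^ n
  set s := √(4 - 3 * x) with hs_def
  have hs : s ^ 2 = 4 - 3 * x := sq_sqrt (by linarith)
  have hshift : HasSum (fun n => afunCoeff (n + 1) * x ^ (n + 1)) (E - 1) := by
    simpa [afunCoeff] using
      (hasSum_nat_add_iff' (f := fun n => afunCoeff n * x ^ n) 1).mpr hE.hasSum
  -- both sides of `(32 + x) E = 32 + 11 x - x s`, expanded as series in `x ^ (n + 1)`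
  have hL : HasSum (fun n => (32 * afunCoeff (n + 1) + afunCoeff n) * x ^ (n + 1))
      (32 * (E - 1) + x * E) :=
    ((hshift.mul_left 32).add (hE.hasSum.mul_left x)).congr_fun fun n => by ring
  have hR : HasSum (fun n => (32 * afunCoeff (n + 1) + afunCoeff n) * x ^ (n + 1))
      (-(x * s) + 11 * x) :=
    ((hasSum_sqrtCoeff_mul_pow_mul (by rw [abs_lt]; constructor <;> linarith)).add
      (hasSum_ite_eq 0 (11 * x))).congr_fun fun n => by
        rw [afunCoeff_succ_add]; split_ifs with hn <;> simp [hn, add_mul]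
  have hE' := hL.unique hR
  have h10 : 10 + s ≠ 0 := by positivity
  have h32 : 32 + x ≠ 0 := by positivity
  have hAE : Afun x = E := by
    rw [Afun, ← hs_def, one_add_div h10, div_eq_iff h10]
    apply mul_left_cancel₀ h32
    linear_combination -(10 + s) * hE' + x * hs
  exact hAE ▸ hE.hasSum

lemma hasSum_Bfun_sub_Afun {x : ℝ} (hx₀ : 0 ≤ x) (hx₁ : x ≤ 1) :
    HasSum (fun n => (sqrtCoeff n ^ 2 - afunCoeff n) * x ^ n) (Bfun x - Afun x) :=
  ((hasSum_Bfun hx₀ hx₁).sub (hasSum_afunCoeff_mul_pow hx₀ hx₁)).congr_fun fun _ => sub_mul _ _ _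

lemma three_div_two_pow_mul_lt_Bfun_sub_Afun {x : ℝ} (hx₀ : 0 < x) (hx₁ : x ≤ 1) :
    3 / 2 ^ 17 * x ^ 5 < Bfun x - Afun x := by
  have h56 := sum_le_hasSum {5, 6} (fun n _ => mul_nonneg
    (sub_nonneg.2 (afunCoeff_le_sqrtCoeff_sq n)) (pow_nonneg hx₀.le n))
    (hasSum_Bfun_sub_Afun hx₀.le hx₁)
  rw [sum_pair (by norm_num), sqrtCoeff_sq_sub_afunCoeff_five] at h56
  nlinarith [mul_pos sqrtCoeff_sq_sub_afunCoeff_six_pos (pow_pos hx₀ 6)]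

lemma Bfun_sub_Afun_le {x : ℝ} (hx₀ : 0 ≤ x) (hx₁ : x ≤ 1) :
    Bfun x - Afun x ≤ (Bfun 1 - Afun 1) * x ^ 5 := by
  have h₁ := (hasSum_Bfun_sub_Afun zero_le_one le_rfl).mul_right (x ^ 5)
  refine hasSum_le (fun n => ?_) (hasSum_Bfun_sub_Afun hx₀ hx₁)
    (h₁.congr_fun (g := fun n => (sqrtCoeff n ^ 2 - afunCoeff n) * x ^ 5) fun _ => by simp)
  rcases le_or_gt n 4 with hn | hn
  · simp [afunCoeff_eq_sqrtCoeff_sq hn]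
  · exact mul_le_mul_of_nonneg_left (pow_le_pow_of_le_one hx₀ hx₁ hn)
      (sub_nonneg.2 (afunCoeff_le_sqrtCoeff_sq n))

theorem accuracy_lemma :
    (∀ x : ℝ, 0 < x → x ≤ 1 →
        (3 / 2 ^ 17) * x ^ 5 < Bfun x - Afun x ∧
        Bfun x - Afun x ≤ (4 / Real.pi - 14 / 11) * x ^ 5) ∧
    Bfun 1 - Afun 1 = 4 / Real.pi - 14 / 11 := by
  have h₁ : Bfun 1 - Afun 1 = 4 / π - 14 / 11 := by rw [Bfun_one, Afun_one]
  exact ⟨fun x hx₀ hx₁ => ⟨three_div_two_pow_mul_lt_Bfun_sub_Afun hx₀ hx₁,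
    h₁ ▸ Bfun_sub_Afun_le hx₀.le hx₁⟩, h₁⟩
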